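/- arXiv:2401.02374 — 6 statements merged into one kernel-verified Lean document; each statement's English description precedes it below -/
import Mathlib

section
/- Let A be a Noetherian integral domain that is locally factorial, i.e. the localization A_𝔭 at every prime ideal 𝔭 is a unique factorization domain, and let f ∈ A be a nonzero element. Then for every prime ideal 𝔭 of A there exist an element g ∈ A ∖ 𝔭, a unit u of the localization A[g⁻¹], prime elements f₁,…,fₙ of A[g⁻¹], and integers r₁,…,rₙ ≥ 1, such that the image of f in A[g⁻¹] equals u·f₁^{r₁}⋯fₙ^{rₙ}. -/
/-- On a Noetherian locally factorial integral domain, any nonzero element factors, Zariski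
locally around any prime, as a unit times a product of powers of prime elements. -/
theorem exists_local_prime_factorization {A : Type*} [CommRing A] [IsDomain A]
    [IsNoetherianRing A]
    (hfact : ∀ (𝔭 : Ideal A) [𝔭.IsPrime], UniqueFactorizationMonoid (Localization.AtPrime 𝔭))
    (f : A) (hf : f ≠ 0) :
    ∀ (𝔭 : Ideal A), 𝔭.IsPrime →
      ∃ g : A, g ∉ 𝔭 ∧
        ∃ (u : (Localization.Away g)ˣ) (n : ℕ) (p : Fin n → Localization.Away g)
          (r : Fin n → ℕ),
          (∀ i, Prime (p i)) ∧ (∀ i, 1 ≤ r i) ∧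
            algebraMap A (Localization.Away g) f = u * ∏ i, p i ^ r i := by
  intro 𝔭 h𝔭
  haveI := h𝔭
  haveI := hfact 𝔭
  set R := Localization.AtPrime 𝔭 with hRdef
  have hinjR : Function.Injective (algebraMap A R) :=
    IsLocalization.injective R 𝔭.primeCompl_le_nonZeroDivisors
  have hf0 : algebraMap A R f ≠ 0 := fun h => hf (hinjR (by rw [h, map_zero]))
  obtain ⟨m, hm, hassoc⟩ := UniqueFactorizationMonoid.exists_prime_factors (algebraMap A R f) hf0
  set l : List R := m.toList with hldef
  have hlm : (l : Multiset R) = m := Multiset.coe_toList m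
  have hlprod : l.prod = m.prod := by rw [← hlm, Multiset.prod_coe]
  obtain ⟨u, hu⟩ := hassoc
  -- hu : m.prod * u = algebraMap A R f
  have hql : ∀ i : Fin l.length, Prime (l.get i) := fun i =>
    hm _ (by rw [← hlm]; exact Multiset.mem_coe.mpr (l.get_mem i))
  have hsurj : ∀ i : Fin l.length,
      ∃ z : A × 𝔭.primeCompl, l.get i * algebraMap A R z.2 = algebraMap A R z.1 :=
    fun i => IsLocalization.surj _ _
  choose z hz using hsurj
  set a : Fin l.length → A := fun i => (z i).1 with hadef
  set t : Fin l.length → 𝔭.primeCompl := fun i => (z i).2 with htdef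
  have ha : ∀ i, Prime (algebraMap A R (a i)) := fun i =>
    (Associated.prime ⟨(IsLocalization.map_units R (t i)).unit, hz i⟩ (hql i))
  obtain ⟨⟨c, s₁⟩, hcs⟩ := IsLocalization.surj (M := 𝔭.primeCompl) (u : R)
  -- main equation in A
  have hE : f * (↑s₁ * ∏ i, (↑(t i) : A)) = c * ∏ i, a i := by
    apply hinjR
    rw [map_mul, map_mul, map_prod, map_mul, map_prod, ← hu, ← hcs, hlprod.symm,
      ← Fin.prod_univ_getElem l]
    have h1 : (∏ i, algebraMap A R (a i)) =
        ∏ i : Fin l.length, (l.get i * algebraMap A R (t i)) :=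
      Finset.prod_congr rfl fun i _ => (hz i).symm
    rw [h1, Finset.prod_mul_distrib]
    simp only [List.get_eq_getElem]
    ring
  have hcmem : c ∈ 𝔭.primeCompl := by
    have hcu : IsUnit (algebraMap A R c) := hcs ▸ (u.isUnit.mul (IsLocalization.map_units R s₁))
    exact (IsLocalization.AtPrime.isUnit_to_map_iff R 𝔭 c).mp hcu
  -- the prime ideals downstairs
  set Q : Fin l.length → Ideal A := fun i =>
    Ideal.comap (algebraMap A R) (Ideal.span {algebraMap A R (a i)}) with hQdef
  have hQprime : ∀ i, (Q i).IsPrime := by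
    intro i
    haveI := (Ideal.span_singleton_prime (ha i).ne_zero).mpr (ha i)
    exact Ideal.IsPrime.comap _
  have hQle : ∀ i, Q i ≤ 𝔭 := by
    intro i x hx
    rw [← Localization.AtPrime.comap_maximalIdeal (I := 𝔭)]
    exact Ideal.comap_mono
      (IsLocalRing.le_maximalIdeal (Ideal.span_singleton_ne_top (ha i).not_isUnit)) hx
  have haiQ : ∀ i, a i ∈ Q i := fun i => Ideal.mem_comap.mpr (Ideal.subset_span rfl)
  have hto : ∀ i, ∀ b ∈ Q i, ∃ d, d ∈ 𝔭.primeCompl ∧ d * b ∈ Ideal.span {a i} := by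
    intro i b hb
    rw [hQdef] at hb
    replace hb := Ideal.mem_span_singleton.mp (Ideal.mem_comap.mp hb)
    obtain ⟨w, hw⟩ := hb
    obtain ⟨⟨y, s⟩, hy⟩ := IsLocalization.surj (M := 𝔭.primeCompl) w
    have heq : (↑s : A) * b = a i * y := by
      apply hinjR
      rw [map_mul, map_mul, hw, ← hy]; ring
    exact ⟨s, s.2, Ideal.mem_span_singleton.mpr ⟨y, heq⟩⟩
  -- choose denominators clearing each Q i
  have hdchoice : ∀ i : Fin l.length, ∃ d : A, d ∈ 𝔭.primeCompl ∧
      ∃ T : Finset A, Ideal.span (↑T : Set A) = Q i ∧ ∀ b ∈ T, d * b ∈ Ideal.span {a i} := by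
    intro i
    obtain ⟨T, hT⟩ := (isNoetherianRing_iff_ideal_fg A).mp ‹IsNoetherianRing A› (Q i)
    have hmem : ∀ b : {x // x ∈ T}, (b : A) ∈ Q i := fun b =>
      hT ▸ Ideal.subset_span b.2
    choose D hD1 hD2 using fun b : {x // x ∈ T} => hto i b (hmem b)
    refine ⟨∏ b ∈ T.attach, D b, Submonoid.prod_mem _ (fun b _ => hD1 b), T, hT, ?_⟩
    intro b hb
    obtain ⟨e, he⟩ := Finset.dvd_prod_of_mem D (Finset.mem_attach T ⟨b, hb⟩)
    rw [he, mul_comm (D ⟨b, hb⟩) e, mul_assoc]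
    exact Ideal.mul_mem_left _ e (hD2 ⟨b, hb⟩)
  choose d hdmem T hT hdT using hdchoice
  -- the localizing element
  set g : A := (c * (↑s₁ * ∏ i, (↑(t i) : A))) * ∏ i, d i with hgdef
  have hg : g ∉ 𝔭 := by
    refine Submonoid.mul_mem _ (Submonoid.mul_mem _ hcmem (Submonoid.mul_mem _ s₁.2
      (Submonoid.prod_mem _ fun i _ => (t i).2))) (Submonoid.prod_mem _ fun i _ => hdmem i)
  have hg0 : g ≠ 0 := fun h => hg (h ▸ 𝔭.zero_mem)
  set S := Localization.Away g with hSdef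
  have hinjS : Function.Injective (algebraMap A S) :=
    IsLocalization.injective S (powers_le_nonZeroDivisors_of_noZeroDivisors hg0)
  have hgu : IsUnit (algebraMap A S g) :=
    IsLocalization.map_units S (⟨g, Submonoid.mem_powers g⟩ : Submonoid.powers g)
  have hdiv : ∀ x : A, x ∣ g → IsUnit (algebraMap A S x) := by
    rintro x ⟨e, he⟩
    have hxe : IsUnit (algebraMap A S x * algebraMap A S e) := by
      rw [← map_mul, ← he]; exact hgu
    exact isUnit_of_mul_isUnit_left hxe
  have hdU : ∀ i, IsUnit (algebraMap A S (d i)) := fun i =>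
    hdiv (d i) (Dvd.dvd.mul_left (Finset.dvd_prod_of_mem d (Finset.mem_univ i)) _)
  -- the span of a i upstairs is the map of Q i
  have hmapQ : ∀ i, Ideal.map (algebraMap A S) (Q i) = Ideal.span {algebraMap A S (a i)} := by
    intro i
    apply le_antisymm
    · rw [← hT i, Ideal.map_span, Ideal.span_le]
      rintro _ ⟨b, hb, rfl⟩
      rw [SetLike.mem_coe, Ideal.mem_span_singleton]
      obtain ⟨e, he⟩ := Ideal.mem_span_singleton.mp (hdT i b hb)
      have hu' := hdU i
      have h3 : (↑hu'.unit⁻¹ : S) * (algebraMap A S (d i) * algebraMap A S b)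
          = algebraMap A S b := by
        rw [← mul_assoc, hu'.val_inv_mul, one_mul]
      refine ⟨↑hu'.unit⁻¹ * algebraMap A S e, ?_⟩
      calc algebraMap A S b
          = (↑hu'.unit⁻¹ : S) * (algebraMap A S (d i) * algebraMap A S b) := h3.symm
        _ = (↑hu'.unit⁻¹ : S) * (algebraMap A S (a i) * algebraMap A S e) := by
            rw [← map_mul, ← map_mul, he]
        _ = algebraMap A S (a i) * (↑hu'.unit⁻¹ * algebraMap A S e) := by ring
    · rw [Ideal.span_le, Set.singleton_subset_iff]
      exact Ideal.mem_map_of_mem _ (haiQ i)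
  have hprimeIdeal : ∀ i, (Ideal.span {algebraMap A S (a i)}).IsPrime := by
    intro i
    have hdisj : Disjoint ((Submonoid.powers g : Submonoid A) : Set A) ((Q i : Ideal A) : Set A) := by
      rw [Set.disjoint_left]
      rintro x ⟨k, rfl⟩ hx
      exact hg (hQle i ((hQprime i).mem_of_pow_mem k hx))
    have := IsLocalization.isPrime_of_isPrime_disjoint (Submonoid.powers g) S (Q i)
      (hQprime i) hdisj
    rwa [hmapQ i] at this
  have hane : ∀ i, algebraMap A S (a i) ≠ 0 := by
    intro i h
    exact (ha i).ne_zero (by rw [hinjS (by rw [h, map_zero] : algebraMap A S (a i)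
      = algebraMap A S 0), map_zero])
  have hprimeS : ∀ i, Prime (algebraMap A S (a i)) := fun i =>
    (Ideal.span_singleton_prime (hane i)).mp (hprimeIdeal i)
  -- the unit
  have hcU : IsUnit (algebraMap A S c) :=
    hdiv c ⟨(↑s₁ * ∏ i, (↑(t i) : A)) * ∏ i, d i, by rw [hgdef]; ring⟩
  have hsU : IsUnit (algebraMap A S (↑s₁ * ∏ i, (↑(t i) : A))) :=
    hdiv _ ⟨c * ∏ i, d i, by rw [hgdef]; ring⟩
  refine ⟨g, hg, hcU.unit * hsU.unit⁻¹, l.length, fun i => algebraMap A S (a i),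
    fun _ => 1, hprimeS, fun _ => le_refl 1, ?_⟩
  simp only [pow_one]
  have hEs : algebraMap A S f * ↑hsU.unit = ↑hcU.unit * ∏ i, algebraMap A S (a i) := by
    rw [hsU.unit_spec, hcU.unit_spec, ← map_mul, hE, map_mul, map_prod]
  have h4 : algebraMap A S f = (↑hcU.unit * ∏ i, algebraMap A S (a i)) * ↑hsU.unit⁻¹ :=
    (Units.eq_mul_inv_iff_mul_eq _).mpr hEs
  rw [h4, Units.val_mul]
  ring
end

section
/- Let k be a field, let n, m be natural numbers, and let B₁,…,Bₙ be pairwise disjoint nonempty subsets of {1,…,m}. Then the k-algebra homomorphism φ : k[x₁,…,xₙ] → k[y₁,…,y_m] determined by φ(x_i) = ∏_{j ∈ B_i} y_j makes k[y₁,…,y_m] into a flat k[x₁,…,xₙ]-module. -/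
open MvPolynomial

namespace FlatMonomialAux

variable {k : Type*} [Field k] {n m : ℕ} (B : Fin n → Finset (Fin m))

noncomputable def ind (i : Fin n) : Fin m →₀ ℕ := (B i).sum fun j => Finsupp.single j 1

lemma ind_apply (i : Fin n) (j : Fin m) : ind B i j = if j ∈ B i then 1 else 0 := by
  classical
  rw [ind, Finsupp.finset_sum_apply]
  simp only [Finsupp.single_apply]
  rw [Finset.sum_ite_eq' (B i) j fun _ => 1]

noncomputable def sig (e : Fin n →₀ ℕ) : Fin m →₀ ℕ := ∑ i : Fin n, e i • ind B i

lemma sig_apply (e : Fin n →₀ ℕ) (j : Fin m) :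
    sig B e j = ∑ i : Fin n, e i * ind B i j := by
  rw [sig, Finsupp.finset_sum_apply]
  simp [Finsupp.smul_apply]

variable (hdisj : ∀ i j, i ≠ j → Disjoint (B i) (B j))

include hdisj in
lemma sig_apply_mem {i : Fin n} {j : Fin m} (hj : j ∈ B i) (e : Fin n →₀ ℕ) :
    sig B e j = e i := by
  classical
  rw [sig_apply]
  rw [Finset.sum_eq_single i]
  · rw [ind_apply, if_pos hj, mul_one]
  · intro i' _ hi'
    rw [ind_apply, if_neg, mul_zero]
    exact fun hj' => absurd hj (Finset.disjoint_left.1 (hdisj i' i hi') hj')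
  · intro h; exact absurd (Finset.mem_univ i) h

include hdisj in
lemma sig_injective (hne : ∀ i, (B i).Nonempty) :
    Function.Injective (sig B) := by
  intro e e' h
  ext i
  obtain ⟨j, hj⟩ := hne i
  have h2 := DFunLike.congr_fun h j
  rwa [sig_apply_mem B hdisj hj, sig_apply_mem B hdisj hj] at h2

include hdisj in
lemma add_inj {e e' : Fin n →₀ ℕ} {c c' : Fin m →₀ ℕ}
    (hc : ∀ i, ∃ j ∈ B i, c j = 0) (hc' : ∀ i, ∃ j ∈ B i, c' j = 0)
    (h : sig B e + c = sig B e' + c') : e = e' ∧ c = c' := by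
  have he : e = e' := by
    ext i
    have h1 : e i ≤ e' i := by
      obtain ⟨j, hjB, hj0⟩ := hc' i
      have this := DFunLike.congr_fun h j
      rw [Finsupp.add_apply, Finsupp.add_apply, sig_apply_mem B hdisj hjB,
        sig_apply_mem B hdisj hjB, hj0, add_zero] at this
      omega
    have h2 : e' i ≤ e i := by
      obtain ⟨j, hjB, hj0⟩ := hc i
      have this := DFunLike.congr_fun h j
      rw [Finsupp.add_apply, Finsupp.add_apply, sig_apply_mem B hdisj hjB,
        sig_apply_mem B hdisj hjB, hj0, add_zero] at this
      omega
    omega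
  subst he
  exact ⟨rfl, add_left_cancel h⟩


variable (hne : ∀ i, (B i).Nonempty)

noncomputable def eOf (a : Fin m →₀ ℕ) : Fin n →₀ ℕ :=
  Finsupp.equivFunOnFinite.symm fun i => (B i).inf' (hne i) a

lemma eOf_apply (a : Fin m →₀ ℕ) (i : Fin n) : eOf B hne a i = (B i).inf' (hne i) a := rfl

include hdisj in
lemma sig_eOf_le (a : Fin m →₀ ℕ) : sig B (eOf B hne a) ≤ a := by
  intro j
  by_cases h : ∃ i, j ∈ B i
  · obtain ⟨i, hi⟩ := h
    rw [sig_apply_mem B hdisj hi, eOf_apply]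
    exact Finset.inf'_le _ hi
  · push_neg at h
    have : sig B (eOf B hne a) j = 0 := by
      rw [sig_apply]
      refine Finset.sum_eq_zero fun i _ => ?_
      rw [ind_apply, if_neg (h i), mul_zero]
    simp [this]

noncomputable def cOf (a : Fin m →₀ ℕ) : Fin m →₀ ℕ := a - sig B (eOf B hne a)

include hdisj in
lemma sig_add_cOf (a : Fin m →₀ ℕ) : sig B (eOf B hne a) + cOf B hne a = a :=
  add_tsub_cancel_of_le (sig_eOf_le B hdisj hne a)

include hdisj in
lemma cOf_reduced (a : Fin m →₀ ℕ) : ∀ i, ∃ j ∈ B i, cOf B hne a j = 0 := by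
  intro i
  obtain ⟨j, hjB, hj⟩ := Finset.exists_mem_eq_inf' (hne i) a
  refine ⟨j, hjB, ?_⟩
  rw [cOf]
  rw [Finsupp.tsub_apply, sig_apply_mem B hdisj hjB, eOf_apply, ← hj, Nat.sub_self]


lemma prod_X_eq (i : Fin n) :
    (∏ j ∈ B i, (X j : MvPolynomial (Fin m) k)) = monomial (ind B i) 1 := by
  rw [ind, monomial_sum_one]
  rfl

/-- the defining family of the algebra map -/
noncomputable def f : Fin n → MvPolynomial (Fin m) k :=
  fun i => ∏ j ∈ B i, X j

lemma aeval_monomial_eq (e : Fin n →₀ ℕ) (r : k) :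
    aeval (f (k := k) B) (monomial e r) = monomial (sig B e) r := by
  rw [aeval_monomial, Finsupp.prod_fintype _ _ (fun i => pow_zero _)]
  have : ∀ i : Fin n, (f (k := k) B i) ^ e i = monomial (e i • ind B i) 1 := by
    intro i
    rw [f, prod_X_eq, monomial_pow, one_pow]
  simp_rw [this]
  rw [← monomial_sum_one, ← sig, algebraMap_eq, C_mul_monomial, mul_one]

include hdisj hne in
lemma coeff_aeval_sig (p : MvPolynomial (Fin n) k) (e : Fin n →₀ ℕ) :
    coeff (sig B e) (aeval (f (k := k) B) p) = coeff e p := by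
  induction p using MvPolynomial.induction_on' with
  | monomial e' r =>
    rw [aeval_monomial_eq, coeff_monomial, coeff_monomial]
    congr 1
    simp only [eq_iff_iff]
    exact ⟨fun h => sig_injective B hdisj hne h, fun h => h ▸ rfl⟩
  | add p q hp hq => rw [map_add, coeff_add, coeff_add, hp, hq]

lemma coeff_aeval_notin (p : MvPolynomial (Fin n) k) (b : Fin m →₀ ℕ)
    (hb : ∀ e, sig B e ≠ b) : coeff b (aeval (f (k := k) B) p) = 0 := by
  induction p using MvPolynomial.induction_on' with
  | monomial e' r => rw [aeval_monomial_eq, coeff_monomial, if_neg (hb e')]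
  | add p q hp hq => rw [map_add, coeff_add, hp, hq, add_zero]

end FlatMonomialAux

open FlatMonomialAux in
theorem flat_aux (k : Type*) [Field k] (n m : ℕ) (B : Fin n → Finset (Fin m))
    (hdisj : ∀ i j, i ≠ j → Disjoint (B i) (B j)) (hne : ∀ i, (B i).Nonempty) :
    letI : Algebra (MvPolynomial (Fin n) k) (MvPolynomial (Fin m) k) :=
      ((aeval (f (k := k) B)) :
        MvPolynomial (Fin n) k →ₐ[k] MvPolynomial (Fin m) k).toRingHom.toAlgebra
    Module.Flat (MvPolynomial (Fin n) k) (MvPolynomial (Fin m) k) := by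
  letI : Algebra (MvPolynomial (Fin n) k) (MvPolynomial (Fin m) k) :=
      ((aeval (f (k := k) B)) :
        MvPolynomial (Fin n) k →ₐ[k] MvPolynomial (Fin m) k).toRingHom.toAlgebra
  have hsmul : ∀ (p : MvPolynomial (Fin n) k) (q : MvPolynomial (Fin m) k),
      p • q = aeval (f (k := k) B) p * q := fun p q => by
    rw [Algebra.smul_def, RingHom.algebraMap_toAlgebra]; rfl
  set v : {c : Fin m →₀ ℕ // ∀ i, ∃ j ∈ B i, c j = 0} → MvPolynomial (Fin m) k :=
    fun c => monomial c.1 1 with hv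
  have hcoeff : ∀ (p : MvPolynomial (Fin n) k)
      (c c' : {c : Fin m →₀ ℕ // ∀ i, ∃ j ∈ B i, c j = 0}) (e : Fin n →₀ ℕ),
      coeff (sig B e + c.1) (p • v c') = if c' = c then coeff e p else 0 := by
    intro p c c' e
    rw [hsmul, hv, coeff_mul_monomial']
    by_cases hcc : c' = c
    · subst hcc
      rw [if_pos (le_add_self), if_pos rfl, add_tsub_cancel_right,
        coeff_aeval_sig B hdisj hne, mul_one]
    · rw [if_neg hcc]
      by_cases hle : c'.1 ≤ sig B e + c.1
      · rw [if_pos hle, coeff_aeval_notin, zero_mul]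
        intro e'' heq
        have hsum : sig B e'' + c'.1 = sig B e + c.1 := by
          rw [heq, tsub_add_cancel_of_le hle]
        exact hcc (Subtype.ext (add_inj B hdisj c'.2 c.2 hsum).2)
      · rw [if_neg hle]
  have li : LinearIndependent (MvPolynomial (Fin n) k) v := by
    rw [linearIndependent_iff']
    intro s g hsum c hcs
    ext e
    have h1 := congrArg (coeff (sig B e + c.1)) hsum
    rw [coeff_sum, coeff_zero] at h1
    simp_rw [hcoeff _ _ _ e] at h1
    rw [Finset.sum_ite_eq' s c (fun c' => coeff e (g c')), if_pos hcs] at h1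
    simpa using h1
  have hspan : ⊤ ≤ Submodule.span (MvPolynomial (Fin n) k) (Set.range v) := by
    rintro p -
    rw [as_sum p]
    refine Submodule.sum_mem _ fun a _ => ?_
    have key : monomial a (coeff a p) =
        (monomial (eOf B hne a) (coeff a p) : MvPolynomial (Fin n) k) •
          v ⟨cOf B hne a, cOf_reduced B hdisj hne a⟩ := by
      rw [hsmul, hv, aeval_monomial_eq, monomial_mul, mul_one, sig_add_cOf B hdisj hne a]
    rw [key]
    exact Submodule.smul_mem _ _ (Submodule.subset_span (Set.mem_range_self _))
  haveI : Module.Free (MvPolynomial (Fin n) k) (MvPolynomial (Fin m) k) :=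
    Module.Free.of_basis (Module.Basis.mk li hspan)
  exact Module.Flat.of_free


/-- Let `B₁, …, Bₙ` be pairwise disjoint nonempty subsets of `{1, …, m}`. The `k`-algebra map
`k[x₁,…,xₙ] → k[y₁,…,y_m]`, `x_i ↦ ∏_{j ∈ B_i} y_j`, makes `k[y₁,…,y_m]` a flat
`k[x₁,…,xₙ]`-module. -/
theorem flat_of_monomial_map (k : Type*) [Field k] (n m : ℕ) (B : Fin n → Finset (Fin m))
    (hdisj : ∀ i j, i ≠ j → Disjoint (B i) (B j)) (hne : ∀ i, (B i).Nonempty) :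
    letI : Algebra (MvPolynomial (Fin n) k) (MvPolynomial (Fin m) k) :=
      ((MvPolynomial.aeval fun i => ∏ j ∈ B i, (MvPolynomial.X j : MvPolynomial (Fin m) k)) :
        MvPolynomial (Fin n) k →ₐ[k] MvPolynomial (Fin m) k).toRingHom.toAlgebra
    Module.Flat (MvPolynomial (Fin n) k) (MvPolynomial (Fin m) k) := by
  exact flat_aux k n m B hdisj hne
end

section
/- Let A be an integral domain, f₁,…,fₙ pairwise non-associated prime elements of A, r₁,…,rₙ ≥ 1, and f = f₁^{r₁}⋯fₙ^{rₙ}. Then the map θ : Aˣ × ℕⁿ → (A, ·) defined by θ(u, (a₁,…,aₙ)) = u·f₁^{a₁}⋯fₙ^{aₙ} is an injective homomorphism of commutative monoids whose image is exactly the submonoid M = A ∩ A[f⁻¹]ˣ of elements of A whose image in the localization A[f⁻¹] is a unit. In particular M ≅ Aˣ × ℕⁿ as commutative monoids. -/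
/-!
Injectivity: the exponent `aᵢ` is recovered from `u * ∏ fⱼ ^ aⱼ` as the multiplicity of the
prime `fᵢ`, after which the unit cancels. Image: an element of `A` becomes a unit in `A[f⁻¹]`
exactly when it divides a power of `f = ∏ fᵢ ^ rᵢ`, and every divisor of a product of primes
is a unit times a product of those primes: peel the primes off one at a time, using that if
`q ∤ x` and `x ∣ q * y` then `x ∣ y`.
-/

open Finset

section ProdPow

variable {α ι : Type*} [CommMonoid α] [Fintype ι]

def prodPowHom (p : ι → α) : Multiplicative (ι → ℕ) →* α where
  toFun a := ∏ i, p i ^ a.toAdd i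
  map_one' := by simp
  map_mul' a b := by simp [pow_add, prod_mul_distrib]

def unitsMulProdPow (p : ι → α) : αˣ × Multiplicative (ι → ℕ) →* α :=
  (Units.coeHom α).coprod (prodPowHom p)

theorem unitsMulProdPow_apply (p : ι → α) (u : αˣ) (a : ι → ℕ) :
    unitsMulProdPow p (u, Multiplicative.ofAdd a) = u * ∏ i, p i ^ a i :=
  rfl

end ProdPow

section PrimeFactors

variable {α : Type*} [CommMonoidWithZero α] [IsCancelMulZero α]

theorem Prime.dvd_of_dvd_mul_of_not_dvd {q x y : α} (hq : Prime q) (hqx : ¬q ∣ x)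
    (hxy : x ∣ q * y) : x ∣ y := by
  obtain ⟨z, hz⟩ := hxy
  obtain ⟨w, rfl⟩ : q ∣ z :=
    (hq.dvd_mul.mp ⟨y, hz.symm⟩).resolve_left hqx
  refine ⟨w, mul_left_cancel₀ hq.ne_zero ?_⟩
  rw [hz, mul_left_comm]

theorem Submonoid.mem_of_dvd_of_mem_closure_primes (M : Submonoid α)
    (units_mem : ∀ u : αˣ, (u : α) ∈ M) {P : Set α} (hP : ∀ q ∈ P, Prime q)
    (hPM : P ⊆ M)
    {x y : α} (hy : y ∈ Submonoid.closure P) (hxy : x ∣ y) : x ∈ M := by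
  induction hy using Submonoid.closure_induction_left generalizing x with
  | one =>
    obtain ⟨u, rfl⟩ := isUnit_of_dvd_one hxy
    exact units_mem u
  | mul_left q hq y _ ih =>
    by_cases hqx : q ∣ x
    · obtain ⟨x', rfl⟩ := hqx
      exact M.mul_mem (hPM hq) (ih ((mul_dvd_mul_iff_left (hP q hq).ne_zero).mp hxy))
    · exact ih ((hP q hq).dvd_of_dvd_mul_of_not_dvd hqx hxy)

variable {ι : Type*} [Fintype ι]

theorem emultiplicity_prod_pow {p : ι → α} (hp : ∀ i, Prime (p i))
    (hassoc : Pairwise fun i j ↦ ¬Associated (p i) (p j)) (a : ι → ℕ) (i : ι) :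
    emultiplicity (p i) (∏ j, p j ^ a j) = a i := by
  rw [emultiplicity_prod (hp i), sum_eq_single i]
  · exact emultiplicity_pow_self_of_prime (hp i) _
  · intro j _ hji
    refine emultiplicity_eq_zero.mpr fun hdvd ↦ hassoc hji.symm ?_
    exact (hp i).associated_of_dvd (hp j) ((hp i).dvd_of_dvd_pow hdvd)
  · simp

theorem unitsMulProdPow_injective [Nontrivial α] {p : ι → α} (hp : ∀ i, Prime (p i))
    (hassoc : Pairwise fun i j ↦ ¬Associated (p i) (p j)) :
    Function.Injective (unitsMulProdPow p) := by
  rintro ⟨u, a⟩ ⟨v, b⟩ h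
  have hmult (w : αˣ) (c : ι → ℕ) (i : ι) :
      emultiplicity (p i) (unitsMulProdPow p (w, Multiplicative.ofAdd c)) = c i := by
    rw [unitsMulProdPow_apply, emultiplicity_mul (hp i),
      emultiplicity_of_unit_right (hp i).not_isUnit, zero_add, emultiplicity_prod_pow hp hassoc]
  have hab : a = b := funext fun i ↦ by
    exact_mod_cast (hmult u a i).symm.trans (h ▸ hmult v b i)
  subst hab
  have hprod : ∏ i, p i ^ a.toAdd i ≠ 0 :=
    prod_ne_zero_iff.mpr fun i _ ↦ pow_ne_zero _ (hp i).ne_zero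
  exact Prod.ext (Units.ext (mul_right_cancel₀ hprod h)) rfl

theorem mem_range_unitsMulProdPow_of_dvd {p : ι → α} (hp : ∀ i, Prime (p i)) {x : α}
    {s : ι → ℕ} (hx : x ∣ ∏ i, p i ^ s i) : x ∈ Set.range (unitsMulProdPow p) := by
  classical
  have units_mem (u : αˣ) : (u : α) ∈ MonoidHom.mrange (unitsMulProdPow p) :=
    ⟨(u, Multiplicative.ofAdd 0), (unitsMulProdPow_apply p u 0).trans (by simp)⟩
  have primes_mem : Set.range p ⊆ MonoidHom.mrange (unitsMulProdPow p) := by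
    rintro _ ⟨i, rfl⟩
    exact ⟨(1, Multiplicative.ofAdd (Pi.single i 1)), by
      simp [unitsMulProdPow_apply, Pi.single_apply, prod_ite_eq']⟩
  have hprod : ∏ i, p i ^ s i ∈ Submonoid.closure (Set.range p) :=
    Submonoid.prod_mem _ fun i _ ↦ pow_mem (Submonoid.subset_closure (Set.mem_range_self i)) _
  exact Submonoid.mem_of_dvd_of_mem_closure_primes _ units_mem (Set.forall_mem_range.mpr hp)
    primes_mem hprod hx

theorem range_unitsMulProdPow {p : ι → α} (hp : ∀ i, Prime (p i)) {r : ι → ℕ}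
    (hr : ∀ i, r i ≠ 0) :
    Set.range (unitsMulProdPow p) = {x | ∃ m, x ∣ (∏ i, p i ^ r i) ^ m} := by
  ext x
  constructor
  · rintro ⟨⟨u, a⟩, rfl⟩
    have hdvd (i : ι) : p i ∣ ∏ j, p j ^ r j :=
      (dvd_pow_self _ (hr i)).trans (dvd_prod_of_mem _ (mem_univ i))
    refine ⟨∑ i, a.toAdd i, Units.mul_left_dvd.mpr ?_⟩
    rw [← prod_pow_eq_pow_sum]
    exact prod_dvd_prod_of_dvd _ _ fun i _ ↦ pow_dvd_pow_of_dvd (hdvd i) _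
  · rintro ⟨m, hm⟩
    simp_rw [← prod_pow, ← pow_mul] at hm
    exact mem_range_unitsMulProdPow_of_dvd hp hm

end PrimeFactors

/-- For pairwise non-associated primes `f₁, …, fₙ` of an integral domain `A` and
`f = f₁^{r₁} ⋯ fₙ^{rₙ}` with all `rᵢ ≥ 1`, the map `(u, (a₁,…,aₙ)) ↦ u·f₁^{a₁}⋯fₙ^{aₙ}`
is an injective monoid homomorphism `Aˣ × ℕⁿ → (A, ·)` whose image is exactly the submonoid
`M = A ∩ A[f⁻¹]ˣ` of elements of `A` mapping to units of the localization `A[f⁻¹]`. -/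
theorem exists_monoidHom_units_pow_primes {A : Type*} [CommRing A] [IsDomain A]
    (n : ℕ) (f₀ : Fin n → A) (hprime : ∀ i, Prime (f₀ i))
    (hassoc : ∀ i j, i ≠ j → ¬ Associated (f₀ i) (f₀ j))
    (r : Fin n → ℕ) (hr : ∀ i, 1 ≤ r i)
    (f : A) (hf : f = ∏ i, f₀ i ^ r i) :
    ∃ θ : Aˣ × Multiplicative (Fin n → ℕ) →* A,
      (∀ (u : Aˣ) (a : Fin n → ℕ),
        θ (u, Multiplicative.ofAdd a) = (u : A) * ∏ i, f₀ i ^ a i) ∧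
      Function.Injective θ ∧
      Set.range θ = {x : A | IsUnit (algebraMap A (Localization.Away f) x)} := by
  subst hf
  refine ⟨unitsMulProdPow f₀, unitsMulProdPow_apply f₀,
    unitsMulProdPow_injective hprime fun i j ↦ hassoc i j, ?_⟩
  rw [range_unitsMulProdPow hprime fun i ↦ Nat.one_le_iff_ne_zero.mp (hr i)]
  ext x
  exact (IsLocalization.Away.algebraMap_isUnit_iff _).symm
end

section
/- Let A be a Noetherian integral domain, let f₁,…,f_i be pairwise non-associated prime elements of A, and let S be a multiplicative submonoid of A with 0 ∉ S such that the image of each f_j in the localization S⁻¹A is a unit. Then there exists a group homomorphism ρ from the unit group (S⁻¹A)ˣ to the free abelian group ℤ^i such that ρ sends the unit determined by f_j to the j-th standard basis vector e_j, for every j = 1,…,i. In particular, the homomorphism ℤ^i → (S⁻¹A)ˣ sending e_j to the class of f_j is a split injection. -/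
open nonZeroDivisors

section Aux

variable {A : Type*} [CommRing A] [IsDomain A]

/-- The units of the fraction field as the Grothendieck group of the monoid of
nonzero elements of `A`. -/
noncomputable def fracUnitsLocalizationMap (A : Type*) [CommRing A] [IsDomain A] :
    Submonoid.LocalizationMap (⊤ : Submonoid A⁰) (FractionRing A)ˣ where
  toFun a := (show IsUnit (algebraMap A (FractionRing A) (a : A)) from
    isUnit_iff_ne_zero.2 fun h =>
      nonZeroDivisors.ne_zero a.2 ((IsFractionRing.injective A (FractionRing A))
        (by rw [h, map_zero]))).unit
  map_mul' a b := by ext; simp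
  isLocalizationMap.map_units y := Group.isUnit _
  isLocalizationMap.surj z := by
    obtain ⟨⟨a, s⟩, h⟩ := IsLocalization.surj (M := A⁰) (z : FractionRing A)
    have ha : a ∈ A⁰ := by
      refine mem_nonZeroDivisors_of_ne_zero fun h0 => ?_
      rw [h0, map_zero] at h
      exact z.ne_zero (by
        have hs : algebraMap A (FractionRing A) s ≠ 0 := fun hs =>
          nonZeroDivisors.ne_zero s.2 ((IsFractionRing.injective A (FractionRing A))
            (by simpa using hs))
        have := mul_eq_zero.1 h
        tauto)
    exact ⟨⟨⟨a, ha⟩, ⟨s, trivial⟩⟩, by ext; simpa using h⟩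
  isLocalizationMap.exists_of_eq {x y} h := by
    refine ⟨1, ?_⟩
    have : (algebraMap A (FractionRing A)) x = (algebraMap A (FractionRing A)) y := by
      simpa using congrArg Units.val h
    simpa using Subtype.ext ((IsFractionRing.injective A (FractionRing A)) this)

/-- The additive valuation attached to a prime element `p`, as a monoid homomorphism
on the nonzero elements of `A`. -/
noncomputable def primeVal [IsNoetherianRing A] {p : A} (hp : Prime p) :
    A⁰ →* Multiplicative ℤ where
  toFun a := Multiplicative.ofAdd (multiplicity p (a : A) : ℤ)
  map_one' := by
    simp [multiplicity_eq_zero.2 (fun h => hp.not_unit (isUnit_of_dvd_one h))]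
  map_mul' a b := by
    have hfin : FiniteMultiplicity p ((a : A) * (b : A)) :=
      FiniteMultiplicity.of_not_isUnit hp.not_isUnit
        (mul_ne_zero (nonZeroDivisors.ne_zero a.2) (nonZeroDivisors.ne_zero b.2))
    simp only [Submonoid.coe_mul, multiplicity_mul hp hfin]
    push_cast
    rw [← ofAdd_add]

end Aux

/-- For pairwise non-associated primes `f₁, …, fᵢ` of a Noetherian domain `A` and a
multiplicative set `S ⊆ A` with `0 ∉ S` such that each `f_j` becomes a unit in `S⁻¹A`,
there is a group homomorphism `ρ : (S⁻¹A)ˣ → ℤ^i` sending (the unit determined by) `f_j`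
to the `j`-th standard basis vector; in particular `ℤ^i → (S⁻¹A)ˣ`, `e_j ↦ f_j`, is a
split injection. -/
theorem exists_retraction_units_localization {A : Type*} [CommRing A] [IsDomain A]
    [IsNoetherianRing A] (i : ℕ) (f : Fin i → A) (hprime : ∀ j, Prime (f j))
    (hassoc : ∀ j l, j ≠ l → ¬ Associated (f j) (f l))
    (S : Submonoid A) (hS : (0 : A) ∉ S)
    (hu : ∀ j, IsUnit (algebraMap A (Localization S) (f j))) :
    ∃ ρ : (Localization S)ˣ →* Multiplicative (Fin i → ℤ),
      ∀ j, ρ (hu j).unit = Multiplicative.ofAdd (Pi.single j (1 : ℤ)) := by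
  classical
  set K := FractionRing A
  -- the ring hom `S⁻¹A → K`
  have hSunit : ∀ s : S, IsUnit (algebraMap A K s) := by
    intro s
    refine isUnit_iff_ne_zero.2 fun h => ?_
    have : (s : A) = 0 := (IsFractionRing.injective A K) (by simpa using h)
    exact hS (this ▸ s.2)
  let g : Localization S →+* K := IsLocalization.lift hSunit
  let loc := fracUnitsLocalizationMap A
  -- the retraction, component by component
  let ρj : Fin i → (Kˣ →* Multiplicative ℤ) := fun j =>
    loc.lift (g := primeVal (hprime j)) (fun y => Group.isUnit _)
  refine ⟨MonoidHom.mk' (fun u => Multiplicative.ofAdd fun j =>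
      Multiplicative.toAdd (ρj j (Units.map (g : Localization S →* K) u))) ?_, ?_⟩
  · intro a b
    simp only [map_mul]
    rfl
  · intro j
    have hfj : (f j) ∈ A⁰ := mem_nonZeroDivisors_of_ne_zero (hprime j).ne_zero
    have key : Units.map (g : Localization S →* K) (hu j).unit = loc ⟨f j, hfj⟩ := by
      ext
      show g ((hu j).unit : Localization S) = _
      rw [IsUnit.unit_spec]
      show (IsLocalization.lift hSunit) (algebraMap A (Localization S) (f j)) = _
      rw [IsLocalization.lift_eq]
      rfl
    have hval : ∀ l, multiplicity (f l) (f j) = if l = j then 1 else 0 := by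
      intro l
      split_ifs with h
      · subst h; exact multiplicity_self
      · refine multiplicity_eq_zero.2 fun hdvd => ?_
        exact hassoc l j h ((hprime l).irreducible.associated_of_dvd
          (hprime j).irreducible hdvd)
    show Multiplicative.ofAdd _ = _
    refine congrArg Multiplicative.ofAdd (funext fun l => ?_)
    rw [key]
    have hl : ρj l (loc ⟨f j, hfj⟩) = primeVal (hprime l) ⟨f j, hfj⟩ :=
      Submonoid.LocalizationMap.lift_eq loc _ _
    show Multiplicative.toAdd ((ρj l) (loc ⟨f j, hfj⟩))
      = (Pi.single j (1 : ℤ) : Fin i → ℤ) l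
    rw [hl]
    show ((multiplicity (f l) (f j) : ℤ)) = (Pi.single j (1 : ℤ) : Fin i → ℤ) l
    rw [hval l]
    rcases eq_or_ne l j with h | h
    · subst h; simp
    · simp [Pi.single_apply, h]
end

section
/- Let A be an integral domain, f₁,…,fₙ pairwise non-associated prime elements of A, r₁,…,rₙ ≥ 1, and f = f₁^{r₁}⋯fₙ^{rₙ} ≠ 0. Then the A-submodule M̲O(A,f) of the localization A[f⁻¹] equals the cyclic A-submodule generated by the single element (f₁⋯fₙ)·f⁻¹, and M̲O(A,f) is a free A-module of rank one with basis {(f₁⋯fₙ)·f⁻¹}. Equivalently, M̲O(A,f) = (f₁^{r₁−1}⋯fₙ^{rₙ−1})⁻¹·A inside A[f⁻¹]. -/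
noncomputable section

/-- `M̲O(A,f)`: the `A`-submodule of `A[f⁻¹]` consisting of the elements `a·f⁻¹` with
`a ∈ √((f))`. -/
def MOmod {A : Type*} [CommRing A] (f : A) : Submodule A (Localization.Away f) :=
  Submodule.span A {x | ∃ a ∈ (Ideal.span {f}).radical,
    x * algebraMap A (Localization.Away f) f = algebraMap A (Localization.Away f) a}

/-! Pairwise non-associated primes dividing `a` have their product dividing `a`, so the radical
of `(f₁^{r₁} ⋯ fₙ^{rₙ})` is `(f₁ ⋯ fₙ)`. Since `f` is a unit in `A[f⁻¹]`, an element `x` with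
`x·f = c·f₁⋯fₙ` is `c • g`, whence `M̲O(A,f) = A·g`. Freeness: `A[f⁻¹]` is a domain containing `A`
and `g ≠ 0`. -/

theorem Finset.prod_dvd_of_prime_of_pairwise_not_associated {M₀ ι : Type*}
    [CommMonoidWithZero M₀] [IsCancelMulZero M₀] {p : ι → M₀} {s : Finset ι}
    (hp : ∀ i ∈ s, Prime (p i))
    (hassoc : (s : Set ι).Pairwise fun i j => ¬ Associated (p i) (p j))
    {a : M₀} (hdvd : ∀ i ∈ s, p i ∣ a) : ∏ i ∈ s, p i ∣ a := by
  classical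
  rw [Finset.prod_eq_multiset_prod]
  refine Multiset.prod_primes_dvd a (by simpa using hp) (by simpa using hdvd) fun b => ?_
  rw [Multiset.countP_map, ← Finset.filter_val, Finset.card_val]
  refine Finset.card_le_one.2 fun i hi j hj => by_contra fun hij => ?_
  rw [Finset.mem_filter] at hi hj
  exact hassoc hi.1 hj.1 hij (hi.2.symm.trans hj.2)

theorem Ideal.radical_span_singleton_prod_pow {R ι : Type*} [CommSemiring R] [IsCancelMulZero R]
    {p : ι → R} {s : Finset ι} (hp : ∀ i ∈ s, Prime (p i))
    (hassoc : (s : Set ι).Pairwise fun i j => ¬ Associated (p i) (p j))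
    {r : ι → ℕ} (hr : ∀ i ∈ s, r i ≠ 0) :
    (Ideal.span {∏ i ∈ s, p i ^ r i}).radical = Ideal.span {∏ i ∈ s, p i} := by
  apply le_antisymm
  · intro a ha
    obtain ⟨k, hk⟩ := Ideal.mem_radical_iff.mp ha
    rw [Ideal.mem_span_singleton] at hk ⊢
    refine Finset.prod_dvd_of_prime_of_pairwise_not_associated hp hassoc fun i hi => ?_
    have hpi : p i ∣ ∏ i ∈ s, p i ^ r i :=
      (dvd_pow_self (p i) (hr i hi)).trans (Finset.dvd_prod_of_mem _ hi)
    exact (hp i hi).dvd_of_dvd_pow (hpi.trans hk)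
  · rw [Ideal.span_singleton_le_iff_mem, Ideal.mem_radical_iff]
    refine ⟨s.sup r, Ideal.mem_span_singleton.mpr ?_⟩
    rw [← Finset.prod_pow]
    exact Finset.prod_dvd_prod_of_dvd _ _ fun i hi => pow_dvd_pow _ (Finset.le_sup hi)

theorem MOmod_eq_span_singleton_of_radical_eq {A : Type*} [CommRing A] {f p : A}
    (hrad : (Ideal.span {f}).radical = Ideal.span {p}) {g : Localization.Away f}
    (hg : g * algebraMap A (Localization.Away f) f = algebraMap A (Localization.Away f) p) :
    MOmod f = Submodule.span A {g} := by
  refine le_antisymm (Submodule.span_le.mpr ?_) (Submodule.span_le.mpr ?_)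
  · rintro x ⟨a, ha, hxa⟩
    obtain ⟨c, rfl⟩ := Ideal.mem_span_singleton'.mp (hrad ▸ ha)
    refine Submodule.mem_span_singleton.mpr
      ⟨c, (IsLocalization.Away.algebraMap_isUnit f).mul_right_cancel ?_⟩
    rw [hxa, Algebra.smul_def, mul_assoc, hg, map_mul]
  · rintro _ rfl
    exact Submodule.subset_span ⟨p, hrad ▸ Ideal.mem_span_singleton_self p, hg⟩

/-- For `f = f₁^{r₁} ⋯ fₙ^{rₙ}` a nonzero product of powers of pairwise non-associated
primes of a domain `A`, the module `M̲O(A,f)` is the cyclic `A`-submodule of `A[f⁻¹]`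
generated by the element `g = (f₁⋯fₙ)·f⁻¹`, and it is free of rank one with basis `{g}`
(i.e. `g` has trivial annihilator). -/
theorem MOmod_eq_span_singleton_and_free {A : Type*} [CommRing A] [IsDomain A]
    (n : ℕ) (f₀ : Fin n → A) (hprime : ∀ i, Prime (f₀ i))
    (hassoc : ∀ i j, i ≠ j → ¬ Associated (f₀ i) (f₀ j))
    (r : Fin n → ℕ) (hr : ∀ i, 1 ≤ r i)
    (f : A) (hf : f = ∏ i, f₀ i ^ r i) (hf0 : f ≠ 0)
    (g : Localization.Away f)
    (hg : g * algebraMap A (Localization.Away f) f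
        = algebraMap A (Localization.Away f) (∏ i, f₀ i)) :
    MOmod f = Submodule.span A {g} ∧ ∀ a : A, a • g = 0 → a = 0 := by
  have hrad : (Ideal.span {f}).radical = Ideal.span {∏ i, f₀ i} := by
    rw [hf]
    exact Ideal.radical_span_singleton_prod_pow (fun i _ => hprime i)
      (fun i _ j _ hij => hassoc i j hij) (fun i _ => Nat.one_le_iff_ne_zero.mp (hr i))
  have hprod : ∏ i, f₀ i ≠ 0 := Finset.prod_ne_zero_iff.mpr fun i _ => (hprime i).ne_zero
  have := Localization.Away.isDomain hf0
  have hg0 : g ≠ 0 := by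
    rintro rfl
    exact hprod (FaithfulSMul.algebraMap_injective A _ (by rw [← hg, zero_mul, map_zero]))
  exact ⟨MOmod_eq_span_singleton_of_radical_eq hrad hg,
    fun a ha => (smul_eq_zero.mp ha).resolve_right hg0⟩

end
end

section
/- Let k be a field and B a smooth k-algebra of finite presentation. Suppose b₁,…,b_m ∈ B are elements such that the differentials db₁,…,db_m form a basis of the B-module of Kähler differentials Ω¹_{B/k}. Then the k-algebra homomorphism k[y₁,…,y_m] → B sending y_i to b_i is étale (i.e., formally étale and of finite presentation). -/
universe u

/-- If `B` is a smooth `k`-algebra and `b₁, …, b_m ∈ B` are such that `db₁, …, db_m` form a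
basis of `Ω¹_{B/k}`, then the `k`-algebra map `k[y₁,…,y_m] → B`, `y_i ↦ b_i`, is étale. -/
theorem etale_of_basis_kaehler (k : Type u) [Field k] (B : Type u) [CommRing B] [Algebra k B]
    [Algebra.Smooth k B] (m : ℕ) (b : Fin m → B)
    (bas : Module.Basis (Fin m) B (Ω[B⁄k]))
    (hbas : ∀ i, bas i = KaehlerDifferential.D k B (b i)) :
    letI : Algebra (MvPolynomial (Fin m) k) B :=
      ((MvPolynomial.aeval b : MvPolynomial (Fin m) k →ₐ[k] B)).toRingHom.toAlgebra
    Algebra.Etale (MvPolynomial (Fin m) k) B := by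
  letI : Algebra (MvPolynomial (Fin m) k) B :=
    ((MvPolynomial.aeval b : MvPolynomial (Fin m) k →ₐ[k] B)).toRingHom.toAlgebra
  set P := MvPolynomial (Fin m) k with hP
  haveI tower : IsScalarTower k P B :=
    IsScalarTower.of_algebraMap_eq' ((MvPolynomial.aeval b).comp_algebraMap).symm
  have hX : ∀ i, algebraMap P B (MvPolynomial.X i) = b i := fun i => by
    rw [RingHom.algebraMap_toAlgebra]
    exact MvPolynomial.aeval_X b i
  -- The base change map `B ⊗[P] Ω[P⁄k] → Ω[B⁄k]` is surjective.
  have hrange : LinearMap.range (KaehlerDifferential.mapBaseChange k P B) = ⊤ := by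
    rw [← top_le_iff, ← bas.span_eq, Submodule.span_le]
    rintro _ ⟨i, rfl⟩
    refine ⟨1 ⊗ₜ KaehlerDifferential.D k P (MvPolynomial.X i), ?_⟩
    rw [KaehlerDifferential.mapBaseChange_tmul, one_smul, KaehlerDifferential.map_D, hX i,
      hbas i]
  -- Hence `Ω[B⁄P] = 0` and `B` is formally unramified over `P`.
  have hsub : Subsingleton (Ω[B⁄P]) := by
    have hmap : KaehlerDifferential.map k P B B = 0 := by
      rw [← LinearMap.ker_eq_top, ← KaehlerDifferential.range_mapBaseChange, hrange]
    refine subsingleton_of_forall_eq 0 fun y => ?_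
    obtain ⟨x, rfl⟩ := KaehlerDifferential.map_surjective k P B y
    rw [hmap]; rfl
  haveI hun : Algebra.FormallyUnramified P B := ⟨hsub⟩
  -- `B` is formally smooth over `P`.
  haveI hsm : Algebra.FormallySmooth P B := by
    apply Algebra.FormallySmooth.of_comp_surjective
    intro C _ _ I hI g
    letI : Algebra k C := ((algebraMap P C).comp (algebraMap k P)).toAlgebra
    haveI : IsScalarTower k P C := IsScalarTower.of_algebraMap_eq' rfl
    -- lift `g` as a `k`-algebra map using formal smoothness over `k`
    obtain ⟨f₀, hf₀⟩ := Algebra.FormallySmooth.comp_surjective (R := k) (A := B) I hI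
      (g.restrictScalars k)
    have hmem : ∀ x : B, Ideal.Quotient.mk I (f₀ x) = g x := fun x => by
      have := AlgHom.congr_fun hf₀ x
      rwa [AlgHom.comp_apply, Ideal.Quotient.mkₐ_eq_mk] at this
    have h0 : ∀ a c : C, a ∈ I → c ∈ I → a * c = 0 := fun a c ha hc => by
      rw [← Ideal.mem_bot, ← hI, pow_two]; exact Ideal.mul_mem_mul ha hc
    -- the correction term on generators
    have hIv : ∀ i, algebraMap P C (MvPolynomial.X i) - f₀ (b i) ∈ I := fun i => by
      rw [← Ideal.Quotient.eq_zero_iff_mem, map_sub, hmem, sub_eq_zero, ← hX i, g.commutes,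
        ← Ideal.Quotient.algebraMap_eq, ← IsScalarTower.algebraMap_apply]
    -- make `C` (and so `I`) a `B`-module via `f₀`
    letI : Algebra B C := f₀.toRingHom.toAlgebra
    have hsmul : ∀ (x : B) (w : I), ((x • w : I) : C) = f₀ x * (w : C) := fun x w => by
      rw [Submodule.coe_smul_of_tower, Algebra.smul_def]; rfl
    let v : Fin m → I := fun i => ⟨algebraMap P C (MvPolynomial.X i) - f₀ (b i), hIv i⟩
    let l : Ω[B⁄k] →ₗ[B] I := bas.constr ℕ v
    have hl : ∀ i, l (bas i) = v i := fun i => bas.constr_basis ℕ v i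
    -- the corrected lift
    let F : B →+* C :=
      { toFun := fun x => f₀ x + (l (KaehlerDifferential.D k B x) : C)
        map_one' := by
          show f₀ 1 + (l (KaehlerDifferential.D k B 1) : C) = 1
          rw [map_one, Derivation.map_one_eq_zero, map_zero, Submodule.coe_zero, add_zero]
        map_mul' := fun x y => by
          have hxy := Derivation.leibniz (KaehlerDifferential.D k B) x y
          have h₂ : (l (KaehlerDifferential.D k B x) : C) *
              (l (KaehlerDifferential.D k B y) : C) = 0 := h0 _ _ (l _).2 (l _).2
          show f₀ (x * y) + (l (KaehlerDifferential.D k B (x * y)) : C) =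
            (f₀ x + (l (KaehlerDifferential.D k B x) : C)) *
            (f₀ y + (l (KaehlerDifferential.D k B y) : C))
          rw [map_mul, hxy, map_add, map_smul, map_smul, Submodule.coe_add, hsmul, hsmul]
          ring_nf
          linear_combination -h₂
        map_zero' := by
          show f₀ 0 + (l (KaehlerDifferential.D k B 0) : C) = 0
          rw [map_zero, map_zero, map_zero, Submodule.coe_zero, add_zero]
        map_add' := fun x y => by
          show f₀ (x + y) + (l (KaehlerDifferential.D k B (x + y)) : C) =
            (f₀ x + (l (KaehlerDifferential.D k B x) : C)) +
            (f₀ y + (l (KaehlerDifferential.D k B y) : C))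
          rw [map_add, map_add, map_add, Submodule.coe_add]
          ring }
    have hcomm : F.comp (algebraMap P B) = algebraMap P C := by
      apply MvPolynomial.ringHom_ext
      · intro c
        have h1 : algebraMap P B (MvPolynomial.C c) = algebraMap k B c := by
          rw [← MvPolynomial.algebraMap_eq, ← IsScalarTower.algebraMap_apply]
        have h2 : algebraMap P C (MvPolynomial.C c) = algebraMap k C c := by
          rw [← MvPolynomial.algebraMap_eq, ← IsScalarTower.algebraMap_apply]
        show F (algebraMap P B (MvPolynomial.C c)) = _
        rw [h1, h2]
        show f₀ (algebraMap k B c) + _ = _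
        rw [Derivation.map_algebraMap, map_zero, Submodule.coe_zero, add_zero, f₀.commutes]
      · intro i
        show F (algebraMap P B (MvPolynomial.X i)) = _
        rw [hX i]
        show f₀ (b i) + (l (KaehlerDifferential.D k B (b i)) : C) = _
        rw [← hbas i, hl i]
        show f₀ (b i) + (algebraMap P C (MvPolynomial.X i) - f₀ (b i)) = _
        ring
    refine ⟨⟨F, fun p => RingHom.congr_fun hcomm p⟩, ?_⟩
    ext x
    show Ideal.Quotient.mk I (f₀ x + (l (KaehlerDifferential.D k B x) : C)) = g x
    rw [map_add, hmem, Ideal.Quotient.eq_zero_iff_mem.mpr (l _).2, add_zero]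
  haveI : Algebra.FinitePresentation k B := Algebra.Smooth.finitePresentation
  haveI hfp : Algebra.FinitePresentation P B :=
    Algebra.FinitePresentation.of_restrict_scalars_finitePresentation k P B
  haveI : Algebra.FormallyEtale P B := Algebra.FormallyEtale.of_formallyUnramified_and_formallySmooth
  exact ⟨inferInstance, hfp⟩
end
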